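/- Let W be a standard Brownian motion, and fix σ > 0 and c > 0. Then for almost every ω the following holds: for every family (Q^μ)_{μ∈ℝ} in which, for each μ ∈ ℝ, Q^μ is a solution of the one-armed Thompson sampling limit ODE driven by the path W(ω) with parameters (μ, σ, c), and with limit regret R(μ) = max(μ,0) − μ·Q^μ(1), one has lim_{μ→−∞} R(μ) = +∞ and liminf_{μ→+∞} R(μ) > 0. -/

import Mathlib

open MeasureTheory ProbabilityTheory Filter Set

/-- The standard normal distribution function `Φ`. -/
noncomputable def Phi (x : ℝ) : ℝ :=
  ∫ s in Set.Iic x, (Real.sqrt (2 * Real.pi))⁻¹ * Real.exp (-s ^ 2 / 2)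

/-- `W` is a standard Brownian motion under `P`: continuous sample paths, `W₀ = 0`,
Gaussian increments `W_t - W_s ~ N(0, t - s)`, and independent increments. -/
def IsStdBM {Ω : Type*} [MeasurableSpace Ω] (P : Measure Ω) (W : ℝ → Ω → ℝ) : Prop :=
  (∀ ω, Continuous fun t => W t ω) ∧
  (∀ ω, W 0 ω = 0) ∧
  (∀ s t : ℝ, 0 ≤ s → s < t →
    Measure.map (fun ω => W t ω - W s ω) P = gaussianReal 0 (Real.toNNReal (t - s))) ∧
  (∀ (n : ℕ) (t : Fin (n + 1) → ℝ), (∀ i, 0 ≤ t i) → StrictMono t →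
    iIndepFun
      (fun i : Fin n => fun ω => W (t i.succ) ω - W (t i.castSucc) ω) P)

/-- A solution of the one-armed Thompson sampling limit ODE driven by `w`
with parameters `(μ, σ, c)`: a continuous nondecreasing `Q : [0,1] → ℝ` with `Q 0 = 0`,
`Q t > 0` on `(0,1]`, differentiable on `(0,1]` with
`Q'(t) = Φ((μ Q t + w (Q t)) / (σ √(Q t + σ² c)))`. -/
def IsOneArmSol (w : ℝ → ℝ) (μ σ c : ℝ) (Q : ℝ → ℝ) : Prop :=
  ContinuousOn Q (Set.Icc 0 1) ∧ MonotoneOn Q (Set.Icc 0 1) ∧ Q 0 = 0 ∧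
  (∀ t ∈ Set.Ioc (0:ℝ) 1, 0 < Q t) ∧
  (∀ t ∈ Set.Ioc (0:ℝ) 1,
    HasDerivWithinAt Q
      (Phi ((μ * Q t + w (Q t)) / (σ * Real.sqrt (Q t + σ ^ 2 * c)))) (Set.Icc 0 1) t)

/-!
Everything happens pathwise: fix a continuous path `w`, with `|w| ≤ C` on `[0,1]`. Since
`Φ ≤ 1`, every solution satisfies `0 ≤ Q t ≤ t ≤ 1`, so the denominator `σ √(Q + σ²c)` stays in
`[σ √(σ²c), σ √(1 + σ²c)]` (here `c > 0` matters) and the rate `Q'` is controlled by `μ Q` alone.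

As `μ → -∞`: either `μ Q(1) ≤ -b` already, or `μ Q ≥ -b` along the whole trajectory, which
keeps `Q' ≥ δ(b) > 0`, hence `Q(1) ≥ δ(b)` and the regret `-μ Q(1) ≥ -μ δ(b)`.

As `μ → +∞`, the regret is `μ (1 - Q(1))`. Up to time `1/μ` one has `μ Q ≤ 1`, so `Q'` is at most
some `θ < 1`, which costs regret at least `1 - θ`. Conversely `Q(t) ≥ ρ t` with `ρ > 0`, and the
Gaussian tail bound `1 - Φ(x) ≤ e^{1/2 - x}` makes the shortfall `1 - Q'` decay like
`e^{-κ μ ρ t}`, so the regret stays bounded and its `liminf` is a genuine one.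
-/

open Real

lemma Phi_eq_measureReal (x : ℝ) : Phi x = (gaussianReal 0 1).real (Iic x) := by
  rw [measureReal_def, gaussianReal_apply_eq_integral 0 one_ne_zero,
    ENNReal.toReal_ofReal (setIntegral_nonneg measurableSet_Iic
      fun _ _ => gaussianPDFReal_nonneg _ _ _)]
  simp [Phi, gaussianPDFReal]

lemma one_sub_Phi (x : ℝ) : 1 - Phi x = (gaussianReal 0 1).real (Ioi x) := by
  rw [Phi_eq_measureReal, ← compl_Iic, measureReal_compl measurableSet_Iic, probReal_univ]

lemma gaussianReal_real_pos {s : Set ℝ} (hs : volume s ≠ 0) : 0 < (gaussianReal 0 1).real s :=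
  ENNReal.toReal_pos (mt (@gaussianReal_absolutelyContinuous' 0 1 one_ne_zero s) hs)
    (measure_ne_top _ _)

lemma Phi_mono : Monotone Phi := fun a b hab => by
  simp only [Phi_eq_measureReal]
  exact measureReal_mono (Iic_subset_Iic.2 hab)

lemma Phi_pos (x : ℝ) : 0 < Phi x :=
  Phi_eq_measureReal x ▸ gaussianReal_real_pos (by simp)

lemma Phi_lt_one (x : ℝ) : Phi x < 1 := by
  linarith [one_sub_Phi x ▸ gaussianReal_real_pos (s := Ioi x) (by simp)]

lemma Phi_le_one (x : ℝ) : Phi x ≤ 1 := (Phi_lt_one x).le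

/-- A Chernoff bound with exponent `1`: linear rather than quadratic decay, but valid for
every `x`. -/
lemma one_sub_Phi_le_exp (x : ℝ) : 1 - Phi x ≤ exp (1 / 2 - x) :=
  calc 1 - Phi x = (gaussianReal 0 1).real (Ioi x) := one_sub_Phi x
    _ ≤ (gaussianReal 0 1).real {y | x ≤ y} := measureReal_mono Ioi_subset_Ici_self
    _ ≤ exp (-1 * x) * mgf id (gaussianReal 0 1) 1 :=
        measure_ge_le_exp_mul_mgf x zero_le_one (integrable_exp_mul_gaussianReal 1)
    _ = exp (1 / 2 - x) := by
        rw [mgf_id_gaussianReal, ← exp_add]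
        congr 1
        norm_num
        ring

lemma div_le_div_of_nonpos_of_le_of_le {N n d e : ℝ} (hN : N ≤ 0) (hNn : N ≤ n) (hd : 0 < d)
    (hde : d ≤ e) : N / d ≤ n / e := by
  have h := div_le_div_of_nonneg_left (neg_nonneg.2 hN) hd hde
  rw [neg_div, neg_div, neg_le_neg_iff] at h
  exact h.trans (div_le_div_of_nonneg_right hNn (hd.le.trans hde))

noncomputable def pullRate (w : ℝ → ℝ) (μ σ c q : ℝ) : ℝ :=
  Phi ((μ * q + w q) / (σ * √(q + σ ^ 2 * c)))

lemma pullRate_le_one (w : ℝ → ℝ) (μ σ c q : ℝ) : pullRate w μ σ c q ≤ 1 := Phi_le_one _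

section pullRate

variable {w : ℝ → ℝ} {σ c C : ℝ}

lemma pullRate_denom_mem_Icc (hσ : 0 < σ) {q : ℝ} (hq : q ∈ Icc (0 : ℝ) 1) :
    σ * √(q + σ ^ 2 * c) ∈ Icc (σ * √(σ ^ 2 * c)) (σ * √(1 + σ ^ 2 * c)) :=
  ⟨by gcongr; linarith [hq.1], by gcongr; linarith [hq.2]⟩

lemma exists_pos_le_pullRate (hC : ∀ q ∈ Icc (0 : ℝ) 1, |w q| ≤ C) (hσ : 0 < σ) (hc : 0 < c)
    (b : ℝ) : ∃ δ > 0, ∀ μ, ∀ q ∈ Icc (0 : ℝ) 1, -b ≤ μ * q → δ ≤ pullRate w μ σ c q := by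
  refine ⟨Phi (-(|b| + |C|) / (σ * √(σ ^ 2 * c))), Phi_pos _, fun μ q hq hμq => Phi_mono ?_⟩
  refine div_le_div_of_nonpos_of_le_of_le (neg_nonpos.2 (by positivity)) ?_ (by positivity)
    (pullRate_denom_mem_Icc (c := c) hσ hq).1
  linarith [le_abs_self b, le_abs_self C, neg_abs_le (w q), hC q hq]

lemma exists_pullRate_le_lt_one (hC : ∀ q ∈ Icc (0 : ℝ) 1, |w q| ≤ C) (hσ : 0 < σ)
    (hc : 0 < c) : ∃ θ < 1, ∀ μ, ∀ q ∈ Icc (0 : ℝ) 1, μ * q ≤ 1 → pullRate w μ σ c q ≤ θ := by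
  refine ⟨Phi ((1 + |C|) / (σ * √(σ ^ 2 * c))), Phi_lt_one _, fun μ q hq hμq => Phi_mono ?_⟩
  have h := div_le_div_of_nonpos_of_le_of_le (N := -(1 + |C|)) (n := -(μ * q + w q))
    (neg_nonpos.2 (by positivity)) ?_ (by positivity) (pullRate_denom_mem_Icc (c := c) hσ hq).1
  · rwa [neg_div, neg_div, neg_le_neg_iff] at h
  · linarith [le_abs_self (w q), hC q hq, le_abs_self C]

lemma exists_one_sub_pullRate_le_exp (hC : ∀ q ∈ Icc (0 : ℝ) 1, |w q| ≤ C) (hσ : 0 < σ)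
    (hc : 0 < c) : ∃ K κ : ℝ, 0 < κ ∧ ∀ μ, ∀ q ∈ Icc (0 : ℝ) 1, 0 ≤ μ * q →
      1 - pullRate w μ σ c q ≤ K * exp (-(κ * (μ * q))) := by
  set d := σ * √(σ ^ 2 * c)
  set D := σ * √(1 + σ ^ 2 * c)
  have hd : 0 < d := by positivity
  refine ⟨exp (1 / 2 + |C| / d), D⁻¹, by positivity, fun μ q hq hμq => ?_⟩
  have hden := pullRate_denom_mem_Icc (c := c) hσ hq
  have hmain : D⁻¹ * (μ * q) ≤ μ * q / (σ * √(q + σ ^ 2 * c)) :=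
    inv_mul_eq_div D _ ▸ div_le_div_of_nonneg_left hμq (hd.trans_le hden.1) hden.2
  have hnoise : -|C| / d ≤ w q / (σ * √(q + σ ^ 2 * c)) :=
    div_le_div_of_nonpos_of_le_of_le (by simp)
      (by linarith [neg_abs_le (w q), hC q hq, le_abs_self C]) hd hden.1
  calc 1 - pullRate w μ σ c q ≤ exp (1 / 2 - (μ * q + w q) / (σ * √(q + σ ^ 2 * c))) :=
        one_sub_Phi_le_exp _
    _ ≤ exp ((1 / 2 + |C| / d) + -(D⁻¹ * (μ * q))) := by
        rw [add_div]
        gcongr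
        linarith [neg_div d |C|]
    _ = _ := exp_add _ _

end pullRate

section IsOneArmSol

variable {w : ℝ → ℝ} {μ σ c : ℝ} {Q : ℝ → ℝ}

lemma IsOneArmSol.hasDerivWithinAt_Ioo (hQ : IsOneArmSol w μ σ c Q) {a b x : ℝ} (ha : 0 ≤ a)
    (hb : b ≤ 1) (hx : x ∈ Ioo a b) :
    HasDerivWithinAt Q (pullRate w μ σ c (Q x)) (Ioo a b) x :=
  (hQ.2.2.2.2 x ⟨ha.trans_lt hx.1, hx.2.le.trans hb⟩).mono
    (Ioo_subset_Icc_self.trans (Icc_subset_Icc ha hb))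

lemma IsOneArmSol.monotoneOn_sub (hQ : IsOneArmSol w μ σ c Q) {g g' : ℝ → ℝ} {a b : ℝ}
    (ha : 0 ≤ a) (hb : b ≤ 1) (hg : ∀ x, HasDerivAt g (g' x) x)
    (hg' : ∀ x ∈ Ioo a b, g' x ≤ pullRate w μ σ c (Q x)) :
    MonotoneOn (fun t => Q t - g t) (Icc a b) := by
  have hgc : Continuous g := continuous_iff_continuousAt.2 fun x => (hg x).continuousAt
  refine monotoneOn_of_hasDerivWithinAt_nonneg (f' := fun x => pullRate w μ σ c (Q x) - g' x)
    (convex_Icc a b)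
    ((hQ.1.mono (Icc_subset_Icc ha hb)).sub hgc.continuousOn) (fun x hx => ?_) fun x hx => ?_
  · rw [interior_Icc] at hx ⊢
    exact (hQ.hasDerivWithinAt_Ioo ha hb hx).sub (hg x).hasDerivWithinAt
  · rw [interior_Icc] at hx
    exact sub_nonneg.2 (hg' x hx)

lemma IsOneArmSol.antitoneOn_sub (hQ : IsOneArmSol w μ σ c Q) {g g' : ℝ → ℝ} {a b : ℝ}
    (ha : 0 ≤ a) (hb : b ≤ 1) (hg : ∀ x, HasDerivAt g (g' x) x)
    (hg' : ∀ x ∈ Ioo a b, pullRate w μ σ c (Q x) ≤ g' x) :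
    AntitoneOn (fun t => Q t - g t) (Icc a b) := by
  have hgc : Continuous g := continuous_iff_continuousAt.2 fun x => (hg x).continuousAt
  refine antitoneOn_of_hasDerivWithinAt_nonpos (f' := fun x => pullRate w μ σ c (Q x) - g' x)
    (convex_Icc a b)
    ((hQ.1.mono (Icc_subset_Icc ha hb)).sub hgc.continuousOn) (fun x hx => ?_) fun x hx => ?_
  · rw [interior_Icc] at hx ⊢
    exact (hQ.hasDerivWithinAt_Ioo ha hb hx).sub (hg x).hasDerivWithinAt
  · rw [interior_Icc] at hx
    exact sub_nonpos.2 (hg' x hx)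

lemma IsOneArmSol.antitoneOn_sub_id (hQ : IsOneArmSol w μ σ c Q) :
    AntitoneOn (fun t => Q t - t) (Icc 0 1) :=
  hQ.antitoneOn_sub le_rfl le_rfl hasDerivAt_id fun _ _ => pullRate_le_one _ _ _ _ _

lemma IsOneArmSol.le_self (hQ : IsOneArmSol w μ σ c Q) {t : ℝ} (ht : t ∈ Icc (0 : ℝ) 1) :
    Q t ≤ t := by
  simpa [hQ.2.2.1] using hQ.antitoneOn_sub_id (left_mem_Icc.2 zero_le_one) ht ht.1

lemma IsOneArmSol.mem_Icc (hQ : IsOneArmSol w μ σ c Q) {t : ℝ} (ht : t ∈ Icc (0 : ℝ) 1) :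
    Q t ∈ Icc (0 : ℝ) 1 :=
  ⟨hQ.2.2.1 ▸ hQ.2.1 (left_mem_Icc.2 zero_le_one) ht ht.1, (hQ.le_self ht).trans ht.2⟩

lemma IsOneArmSol.mul_le (hQ : IsOneArmSol w μ σ c Q) {δ : ℝ}
    (hδ : ∀ t ∈ Icc (0 : ℝ) 1, δ ≤ pullRate w μ σ c (Q t)) {t : ℝ} (ht : t ∈ Icc (0 : ℝ) 1) :
    δ * t ≤ Q t := by
  have h := hQ.monotoneOn_sub le_rfl le_rfl (fun _ => hasDerivAt_mul_const δ)
    (fun x hx => hδ x (Ioo_subset_Icc_self hx)) (left_mem_Icc.2 zero_le_one) ht ht.1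
  simp only [hQ.2.2.1, zero_mul, sub_zero] at h
  linarith

lemma IsOneArmSol.min_le_neg_mul (hQ : IsOneArmSol w μ σ c Q) (hμ : μ ≤ 0) {b δ : ℝ}
    (hδ : ∀ q ∈ Icc (0 : ℝ) 1, -b ≤ μ * q → δ ≤ pullRate w μ σ c q) :
    min b (-μ * δ) ≤ -μ * Q 1 := by
  have h1 : (1 : ℝ) ∈ Icc (0 : ℝ) 1 := right_mem_Icc.2 zero_le_one
  by_cases hb : μ * Q 1 ≤ -b
  · exact (min_le_left _ _).trans (by linarith)
  · have hrate : ∀ t ∈ Icc (0 : ℝ) 1, δ ≤ pullRate w μ σ c (Q t) := fun t ht =>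
      hδ _ (hQ.mem_Icc ht) (by linarith [mul_le_mul_of_nonpos_left (hQ.2.1 ht h1 ht.2) hμ])
    have hδQ : δ ≤ Q 1 := by simpa using hQ.mul_le hrate h1
    exact (min_le_right _ _).trans (mul_le_mul_of_nonneg_left hδQ (neg_nonneg.2 hμ))

lemma IsOneArmSol.le_mul_one_sub (hQ : IsOneArmSol w μ σ c Q) (hμ : 1 ≤ μ) {θ : ℝ}
    (hθ : ∀ q ∈ Icc (0 : ℝ) 1, μ * q ≤ 1 → pullRate w μ σ c q ≤ θ) :
    1 - θ ≤ μ * (1 - Q 1) := by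
  have hμ0 : 0 < μ := zero_lt_one.trans_le hμ
  have hτ : μ⁻¹ ∈ Icc (0 : ℝ) 1 := ⟨by positivity, inv_le_one_of_one_le₀ hμ⟩
  have hrate : ∀ x ∈ Ioo 0 μ⁻¹, pullRate w μ σ c (Q x) ≤ θ := fun x hx => by
    have hx' : x ∈ Icc (0 : ℝ) 1 := ⟨hx.1.le, hx.2.le.trans hτ.2⟩
    refine hθ _ (hQ.mem_Icc hx') ?_
    calc μ * Q x ≤ μ * μ⁻¹ := by gcongr; exact (hQ.le_self hx').trans hx.2.le
      _ = 1 := mul_inv_cancel₀ hμ0.ne'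
  have hearly := hQ.antitoneOn_sub le_rfl hτ.2 (fun _ => hasDerivAt_mul_const θ) hrate
    (left_mem_Icc.2 hτ.1) (right_mem_Icc.2 hτ.1) hτ.1
  have hlate := hQ.antitoneOn_sub_id hτ (right_mem_Icc.2 zero_le_one) hτ.2
  simp only [hQ.2.2.1, zero_mul, sub_zero] at hearly hlate
  calc 1 - θ = μ * (μ⁻¹ - μ⁻¹ * θ) := by field_simp
    _ ≤ μ * (μ⁻¹ - Q μ⁻¹) := mul_le_mul_of_nonneg_left (by linarith) hμ0.le
    _ ≤ μ * (1 - Q 1) := mul_le_mul_of_nonneg_left (by linarith) hμ0.le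

lemma IsOneArmSol.mul_one_sub_le (hQ : IsOneArmSol w μ σ c Q) (hμ : 0 < μ) {ρ K κ : ℝ}
    (hρ : 0 < ρ) (hκ : 0 < κ) (hρQ : ∀ t ∈ Icc (0 : ℝ) 1, ρ * t ≤ Q t)
    (hK : ∀ q ∈ Icc (0 : ℝ) 1, 0 ≤ μ * q → 1 - pullRate w μ σ c q ≤ K * exp (-(κ * (μ * q)))) :
    μ * (1 - Q 1) ≤ K / (κ * ρ) := by
  have h0 : (0 : ℝ) ∈ Icc (0 : ℝ) 1 := left_mem_Icc.2 zero_le_one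
  have h1 : (1 : ℝ) ∈ Icc (0 : ℝ) 1 := right_mem_Icc.2 zero_le_one
  have hK0 : 0 ≤ K := by
    have := hK 0 h0 (by simp)
    simp only [mul_zero, neg_zero, exp_zero, mul_one] at this
    linarith [pullRate_le_one w μ σ c 0]
  set β := κ * μ * ρ with hβ
  have hβ0 : 0 < β := by positivity
  have hg : ∀ x, HasDerivAt (fun t => t + K / β * exp (-(β * t))) (1 - K * exp (-(β * x))) x :=
    fun x => ((hasDerivAt_id' x).add (((hasDerivAt_id' x).const_mul β).neg.exp.const_mul
      (K / β))).congr_deriv (by simp only [Pi.neg_apply]; field_simp; ring)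
  have hrate : ∀ x ∈ Ioo (0 : ℝ) 1, 1 - K * exp (-(β * x)) ≤ pullRate w μ σ c (Q x) := by
    intro x hx
    have hx' : x ∈ Icc (0 : ℝ) 1 := Ioo_subset_Icc_self hx
    have hβx : β * x ≤ κ * (μ * Q x) :=
      calc β * x = κ * (μ * (ρ * x)) := by ring
        _ ≤ κ * (μ * Q x) := by gcongr; exact hρQ x hx'
    have hexp : K * exp (-(κ * (μ * Q x))) ≤ K * exp (-(β * x)) :=
      mul_le_mul_of_nonneg_left (exp_le_exp.2 (neg_le_neg hβx)) hK0
    linarith [hK _ (hQ.mem_Icc hx') (mul_nonneg hμ.le (hQ.mem_Icc hx').1)]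
  have hmono := hQ.monotoneOn_sub le_rfl le_rfl hg hrate h0 h1 zero_le_one
  simp only [hQ.2.2.1, mul_zero, neg_zero, exp_zero, mul_one, zero_add, zero_sub] at hmono
  calc μ * (1 - Q 1) ≤ μ * (K / β) := by
        gcongr
        nlinarith [exp_pos (-β), div_nonneg hK0 hβ0.le]
    _ = K / (κ * ρ) := by rw [hβ]; field_simp

end IsOneArmSol

section regret

variable {w : ℝ → ℝ} {σ c C : ℝ} {Q : ℝ → ℝ → ℝ}

lemma tendsto_neg_mul_atBot (hC : ∀ q ∈ Icc (0 : ℝ) 1, |w q| ≤ C) (hσ : 0 < σ) (hc : 0 < c)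
    (hQ : ∀ μ, IsOneArmSol w μ σ c (Q μ)) : Tendsto (fun μ => -μ * Q μ 1) atBot atTop := by
  refine tendsto_atTop.2 fun b => ?_
  obtain ⟨δ, hδ, hrate⟩ := exists_pos_le_pullRate hC hσ hc b
  filter_upwards [eventually_le_atBot (min 0 (-b / δ))] with μ hμ
  have hb : b ≤ -μ * δ := by
    have := hμ.trans (min_le_right _ _)
    rw [le_div_iff₀ hδ] at this
    linarith
  exact (le_min le_rfl hb).trans ((hQ μ).min_le_neg_mul (hμ.trans (min_le_left _ _)) (hrate μ))

lemma exists_pos_le_mul_one_sub_le (hC : ∀ q ∈ Icc (0 : ℝ) 1, |w q| ≤ C) (hσ : 0 < σ)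
    (hc : 0 < c) (hQ : ∀ μ, IsOneArmSol w μ σ c (Q μ)) :
    ∃ ε > 0, ∃ B, ∀ μ ≥ 1, ε ≤ μ * (1 - Q μ 1) ∧ μ * (1 - Q μ 1) ≤ B := by
  obtain ⟨θ, hθ, hrate_le⟩ := exists_pullRate_le_lt_one hC hσ hc
  obtain ⟨ρ, hρ, hrate_ge⟩ := exists_pos_le_pullRate hC hσ hc 0
  obtain ⟨K, κ, hκ, htail⟩ := exists_one_sub_pullRate_le_exp hC hσ hc
  refine ⟨1 - θ, sub_pos.2 hθ, K / (κ * ρ), fun μ hμ => ⟨(hQ μ).le_mul_one_sub hμ (hrate_le μ),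
    (hQ μ).mul_one_sub_le (by linarith) hρ hκ (fun t ht => (hQ μ).mul_le (fun s hs => ?_) ht)
      (htail μ)⟩⟩
  exact hrate_ge μ _ ((hQ μ).mem_Icc hs)
    (by rw [neg_zero]; exact mul_nonneg (by linarith) ((hQ μ).mem_Icc hs).1)

end regret

/-- Smoothed one-armed Thompson sampling (`c > 0`): almost surely, the limit regret
`R(μ) = max(μ,0) - μ Q^μ(1)` diverges as `μ → -∞` and has positive liminf as `μ → +∞`. -/
theorem smoothed_one_arm_regret {Ω : Type*} [MeasurableSpace Ω] (P : Measure Ω)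
    (W : ℝ → Ω → ℝ) (hW : IsStdBM P W) (σ c : ℝ) (hσ : 0 < σ) (hc : 0 < c) :
    ∀ᵐ ω ∂P, ∀ Q : ℝ → ℝ → ℝ,
      (∀ μ : ℝ, IsOneArmSol (fun x => W x ω) μ σ c (Q μ)) →
      Tendsto (fun μ : ℝ => max μ 0 - μ * Q μ 1) atBot atTop ∧
      0 < Filter.liminf (fun μ : ℝ => max μ 0 - μ * Q μ 1) atTop := by
  refine ae_of_all P fun ω Q hQ => ?_
  obtain ⟨C, hC⟩ := isCompact_Icc.exists_bound_of_continuousOn (hW.1 ω).continuousOn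
  constructor
  · refine (tendsto_neg_mul_atBot hC hσ hc hQ).congr' ?_
    filter_upwards [eventually_le_atBot 0] with μ hμ
    rw [max_eq_right hμ]
    ring
  · obtain ⟨ε, hε, B, hbounds⟩ := exists_pos_le_mul_one_sub_le hC hσ hc hQ
    have hev : ∀ᶠ μ in atTop, ε ≤ max μ 0 - μ * Q μ 1 ∧ max μ 0 - μ * Q μ 1 ≤ B := by
      filter_upwards [eventually_ge_atTop 1] with μ hμ
      rw [max_eq_left (by linarith), ← mul_one_sub]
      exact hbounds μ hμ
    exact hε.trans_le (le_liminf_of_le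
      (isBoundedUnder_of_eventually_le (hev.mono fun _ h => h.2)).isCoboundedUnder_flip
      (hev.mono fun _ h => h.1))
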